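/- Let ζ̄ = h∂_t + ζ be a concurrent vector field on a doubly warped space-time M̄ = I ×_{σ,f} M with ḡ = −f²dt² ⊕ σ²g. If h = 0, or if σ is constant, then ζ is a concurrent vector field on (M,g). Moreover, h = 0 (with ζ̄ ≠ 0) implies σ is constant, and conversely if σ is constant and f is non-constant then h = 0. -/

import Mathlib

noncomputable section

open scoped BigOperators

/-- The model space of an `n`-dimensional manifold (global chart). -/
abbrev E (n : ℕ) := Fin n → ℝ

section Core
variable {α : Type*} [NormedAddCommGroup α] [NormedSpace ℝ α]

/-- Directional derivative `X(φ)` of a scalar function along a vector field. -/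
def dd (X : α → α) (φ : α → ℝ) (p : α) : ℝ := fderiv ℝ φ p (X p)

/-- Lie bracket `[X,Y]` of vector fields. -/
def br (X Y : α → α) (p : α) : α := fderiv ℝ Y p (X p) - fderiv ℝ X p (Y p)

/-- Lie derivative of a metric: `(L_ζ g)(X,Y)(p)`. -/
def lieD (g : α → α → α → ℝ) (ζ X Y : α → α) (p : α) : ℝ :=
  dd ζ (fun q => g q (X q) (Y q)) p - g p (br ζ X p) (Y p) - g p (X p) (br ζ Y p)

/-- `g` is a smooth field of symmetric bilinear forms. -/
structure IsMetric (g : α → α → α → ℝ) : Prop where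
  linL : ∀ p w, IsLinearMap ℝ (fun v => g p v w)
  linR : ∀ p v, IsLinearMap ℝ (g p v)
  symm : ∀ p v w, g p v w = g p w v
  smooth : ∀ v w, ContDiff ℝ (⊤ : ℕ∞) (fun p => g p v w)

/-- Positive definiteness (Riemannian metric). -/
def PosDef (g : α → α → α → ℝ) : Prop := ∀ p v, v ≠ 0 → 0 < g p v v

/-- `ζ` is a conformal vector field for `g` with conformal factor `ρ`. -/
def IsConformal (g : α → α → α → ℝ) (ζ : α → α) (ρ : α → ℝ) : Prop :=
  ∀ X Y : α → α, ContDiff ℝ (⊤ : ℕ∞) X → ContDiff ℝ (⊤ : ℕ∞) Y → ∀ p,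
    lieD g ζ X Y p = ρ p * g p (X p) (Y p)

/-- Conformality restricted to a subset. -/
def IsConformalOn (g : α → α → α → ℝ) (ζ : α → α) (ρ : α → ℝ) (S : Set α) : Prop :=
  ∀ X Y : α → α, ContDiff ℝ (⊤ : ℕ∞) X → ContDiff ℝ (⊤ : ℕ∞) Y → ∀ p ∈ S,
    lieD g ζ X Y p = ρ p * g p (X p) (Y p)

/-- `ζ` is a Killing vector field for `g`. -/
def IsKilling (g : α → α → α → ℝ) (ζ : α → α) : Prop := IsConformal g ζ (fun _ => 0)

/-- Koszul characterization of the Levi-Civita connection of `g`. -/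
def IsLC (g : α → α → α → ℝ) (D : (α → α) → (α → α) → (α → α)) : Prop :=
  ∀ X Y Z : α → α, ContDiff ℝ (⊤ : ℕ∞) X → ContDiff ℝ (⊤ : ℕ∞) Y → ContDiff ℝ (⊤ : ℕ∞) Z → ∀ p,
    2 * g p (D X Y p) (Z p) =
      dd X (fun q => g q (Y q) (Z q)) p + dd Y (fun q => g q (X q) (Z q)) p
        - dd Z (fun q => g q (X q) (Y q)) p
        + g p (br X Y p) (Z p) - g p (br X Z p) (Y p) - g p (br Y Z p) (X p)

/-- Koszul characterization of the Levi-Civita connection, restricted to a subset. -/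
def IsLCOn (g : α → α → α → ℝ) (D : (α → α) → (α → α) → (α → α)) (S : Set α) : Prop :=
  ∀ X Y Z : α → α, ContDiff ℝ (⊤ : ℕ∞) X → ContDiff ℝ (⊤ : ℕ∞) Y → ContDiff ℝ (⊤ : ℕ∞) Z → ∀ p ∈ S,
    2 * g p (D X Y p) (Z p) =
      dd X (fun q => g q (Y q) (Z q)) p + dd Y (fun q => g q (X q) (Z q)) p
        - dd Z (fun q => g q (X q) (Y q)) p
        + g p (br X Y p) (Z p) - g p (br X Z p) (Y p) - g p (br Y Z p) (X p)

end Core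

section ST
variable {n : ℕ}

/-- The doubly warped space-time metric `ḡ = −f²dt² ⊕ σ²g` on `I × M`. -/
def stg (g : E n → E n → E n → ℝ) (f : E n → ℝ) (σ : ℝ → ℝ) :
    (ℝ × E n) → (ℝ × E n) → (ℝ × E n) → ℝ :=
  fun p v w => -((f p.2)^2 * v.1 * w.1) + (σ p.1)^2 * g p.2 v.2 w.2

/-- Lift `h ∂ₜ` of a vector field on the base `I` to the space-time. -/
def liftT (h : ℝ → ℝ) : (ℝ × E n) → (ℝ × E n) := fun p => (h p.1, 0)

/-- Lift of a vector field on `M` to the space-time. -/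
def liftX (ζ : E n → E n) : (ℝ × E n) → (ℝ × E n) := fun p => (0, ζ p.2)

end ST


section Aux
variable {n : ℕ}

lemma fderiv_real_apply (φ : ℝ → ℝ) (t a : ℝ) : fderiv ℝ φ t a = deriv φ t * a := by
  have h : a = a • (1:ℝ) := by simp
  rw [h, map_smul, fderiv_apply_one_eq_deriv]; simp [mul_comm]

lemma single_expand (v : E n) : v = ∑ i, v i • (Pi.single i 1 : E n) := by
  conv_lhs => rw [← Finset.univ_sum_single v]
  refine Finset.sum_congr rfl fun i _ => ?_
  ext j; by_cases hj : j = i <;> simp [Pi.single_apply, hj]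

lemma metric_expand {g : E n → E n → E n → ℝ} (hg : IsMetric g) (p v w : E n) :
    g p v w = ∑ i, ∑ j, v i * (w j * g p (Pi.single i 1) (Pi.single j 1)) := by
  have h1 : ∀ z : E n, g p v z = ∑ i, v i * g p (Pi.single i 1) z := by
    intro z
    set L := IsLinearMap.mk' _ (hg.linL p z) with hL
    have e0 : g p v z = L v := rfl
    rw [e0, congrArg L (single_expand v), map_sum]
    refine Finset.sum_congr rfl fun i _ => ?_
    rw [map_smul, smul_eq_mul]; rfl
  rw [h1]
  refine Finset.sum_congr rfl fun i _ => ?_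
  have h2 : g p (Pi.single i 1) w
      = ∑ j, w j * g p (Pi.single i 1) (Pi.single j 1) := by
    set L := IsLinearMap.mk' _ (hg.linR p (Pi.single i 1)) with hL
    have e0 : g p (Pi.single i 1) w = L w := rfl
    rw [e0, congrArg L (single_expand w), map_sum]
    refine Finset.sum_congr rfl fun j _ => ?_
    rw [map_smul, smul_eq_mul]; rfl
  rw [h2, Finset.mul_sum]

lemma smooth_gAB {g : E n → E n → E n → ℝ} (hg : IsMetric g) {A B : E n → E n}
    (hA : ContDiff ℝ (⊤ : ℕ∞) A) (hB : ContDiff ℝ (⊤ : ℕ∞) B) :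
    ContDiff ℝ (⊤ : ℕ∞) (fun y => g y (A y) (B y)) := by
  have he : (fun y => g y (A y) (B y)) =
      fun y => ∑ i, ∑ j, A y i * (B y j * g y (Pi.single i 1) (Pi.single j 1)) :=
    funext fun y => metric_expand hg y (A y) (B y)
  rw [he]
  refine ContDiff.sum fun i _ => ContDiff.sum fun j _ => ?_
  exact (contDiff_pi.mp hA i).mul ((contDiff_pi.mp hB j).mul (hg.smooth _ _))

lemma fderiv_prod_mul (φ : ℝ → ℝ) (G : E n → ℝ) (t : ℝ) (x : E n)
    (hφ : DifferentiableAt ℝ φ t) (hG : DifferentiableAt ℝ G x) :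
    ∀ (a : ℝ) (u : E n), fderiv ℝ (fun q : ℝ × E n => φ q.1 * G q.2) (t, x) (a, u)
      = deriv φ t * a * G x + φ t * fderiv ℝ G x u := by
  intro a u
  have h1 : HasFDerivAt (fun q : ℝ × E n => φ q.1)
      ((fderiv ℝ φ t).comp (ContinuousLinearMap.fst ℝ ℝ (E n))) (t, x) :=
    hφ.hasFDerivAt.comp (t, x) hasFDerivAt_fst
  have h2 : HasFDerivAt (fun q : ℝ × E n => G q.2)
      ((fderiv ℝ G x).comp (ContinuousLinearMap.snd ℝ ℝ (E n))) (t, x) :=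
    hG.hasFDerivAt.comp (t, x) hasFDerivAt_snd
  have h3 := h1.mul h2
  rw [show (fun q : ℝ × E n => φ q.1 * G q.2) = ((fun q => φ q.1) * fun q => G q.2) from rfl,
    h3.fderiv]
  simp [fderiv_real_apply]
  ring

lemma fderiv_pair (φ : ℝ → ℝ) (A : E n → E n) (t : ℝ) (x : E n)
    (hφ : DifferentiableAt ℝ φ t) (hA : DifferentiableAt ℝ A x) :
    ∀ (a : ℝ) (u : E n), fderiv ℝ (fun q : ℝ × E n => (φ q.1, A q.2)) (t, x) (a, u)
      = (deriv φ t * a, fderiv ℝ A x u) := by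
  intro a u
  have H : HasFDerivAt (fun q : ℝ × E n => (φ q.1, A q.2))
      (((fderiv ℝ φ t).comp (ContinuousLinearMap.fst ℝ ℝ (E n))).prod
        ((fderiv ℝ A x).comp (ContinuousLinearMap.snd ℝ ℝ (E n)))) (t, x) :=
    (hφ.hasFDerivAt.comp (t, x) hasFDerivAt_fst).prodMk
      (hA.hasFDerivAt.comp (t, x) hasFDerivAt_snd)
  rw [H.fderiv]
  simp [fderiv_real_apply]
  ring

lemma fderiv_pair0 (A : E n → E n) (t : ℝ) (x : E n) (hA : DifferentiableAt ℝ A x) :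
    ∀ (a : ℝ) (u : E n), fderiv ℝ (fun q : ℝ × E n => ((0:ℝ), A q.2)) (t, x) (a, u)
      = (0, fderiv ℝ A x u) := by
  intro a u
  have H : HasFDerivAt (fun q : ℝ × E n => ((0:ℝ), A q.2))
      ((0 : (ℝ × E n) →L[ℝ] ℝ).prod
        ((fderiv ℝ A x).comp (ContinuousLinearMap.snd ℝ ℝ (E n)))) (t, x) :=
    (hasFDerivAt_const (0:ℝ) (t, x)).prodMk (hA.hasFDerivAt.comp (t, x) hasFDerivAt_snd)
  rw [H.fderiv]
  simp

end Aux

/-- Let `ζ̄ = h∂ₜ + ζ` be concurrent on the doubly warped space-time.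
If `h = 0` or `σ` is constant then `ζ` is concurrent on `(M,g)`; moreover `h = 0` (with
`ζ̄ ≠ 0`) implies `σ` constant, and `σ` constant with `f` non-constant implies `h = 0`. -/
theorem spacetime_concurrent_parts {n : ℕ}
    (g : E n → E n → E n → ℝ) (f : E n → ℝ) (σ : ℝ → ℝ)
    (hg : IsMetric g) (hgp : PosDef g)
    (hf : ContDiff ℝ (⊤ : ℕ∞) f) (hσ : ContDiff ℝ (⊤ : ℕ∞) σ)
    (hf0 : ∀ q, 0 < f q) (hσ0 : ∀ t, 0 < σ t)
    (DB : ((ℝ × E n) → (ℝ × E n)) → ((ℝ × E n) → (ℝ × E n)) → ((ℝ × E n) → (ℝ × E n)))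
    (DM : (E n → E n) → (E n → E n) → (E n → E n))
    (hDB : IsLC (stg g f σ) DB) (hDM : IsLC g DM)
    (h : ℝ → ℝ) (hh : ContDiff ℝ (⊤ : ℕ∞) h)
    (ζ : E n → E n) (hζ : ContDiff ℝ (⊤ : ℕ∞) ζ)
    (hconc : ∀ X : (ℝ × E n) → (ℝ × E n), ContDiff ℝ (⊤ : ℕ∞) X →
      ∀ p, DB X (liftT h + liftX ζ) p = X p) :
    (((∀ t, h t = 0) ∨ (∃ c : ℝ, ∀ t, σ t = c)) →
        ∀ X : E n → E n, ContDiff ℝ (⊤ : ℕ∞) X → ∀ q, DM X ζ q = X q) ∧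
    (((∀ t, h t = 0) ∧ ¬(∀ p : ℝ × E n, (liftT h + liftX ζ : (ℝ × E n) → (ℝ × E n)) p = 0)) →
        ∃ c : ℝ, ∀ t, σ t = c) ∧
    (((∃ c : ℝ, ∀ t, σ t = c) ∧ ¬(∃ c : ℝ, ∀ q, f q = c)) → ∀ t, h t = 0) := by
  have hσd : Differentiable ℝ σ := hσ.differentiable (by simp)
  have hhd : Differentiable ℝ h := hh.differentiable (by simp)
  have hfd : Differentiable ℝ f := hf.differentiable (by simp)
  have hζd : Differentiable ℝ ζ := hζ.differentiable (by simp)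
  have hz0L : ∀ (y w : E n), g y 0 w = 0 := fun y w => (hg.linL y w).map_zero
  have hz0R : ∀ (y w : E n), g y w 0 = 0 := fun y w => (hg.linR y w).map_zero
  have hzb : (liftT h + liftX ζ : (ℝ × E n) → (ℝ × E n)) = fun q => (h q.1, ζ q.2) := by
    funext q; simp [liftT, liftX, Prod.ext_iff]
  have sζb : ContDiff ℝ (⊤ : ℕ∞) (liftT h + liftX ζ : (ℝ × E n) → (ℝ × E n)) := by
    rw [hzb]; exact (hh.comp contDiff_fst).prodMk (hζ.comp contDiff_snd)
  -- key relation D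
  have relD : ∀ (t : ℝ) (x : E n) (v : E n),
      σ t * deriv σ t * g x (ζ x) v + h t * (f x * fderiv ℝ f x v) = 0 := by
    intro t x v
    have sT : ContDiff ℝ (⊤ : ℕ∞) (fun _ : ℝ × E n => ((1:ℝ), (0:E n))) := contDiff_const
    have sV : ContDiff ℝ (⊤ : ℕ∞) (fun _ : ℝ × E n => ((0:ℝ), v)) := contDiff_const
    have hK := hDB (fun _ => ((1:ℝ), (0:E n))) (liftT h + liftX ζ)
      (fun _ => ((0:ℝ), v)) sT sζb sV (t, x)
    rw [hconc _ sT (t, x)] at hK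
    rw [hzb] at hK
    simp only [dd, br] at hK
    have hfun1 : (fun q : ℝ × E n => stg g f σ q (h q.1, ζ q.2) ((0:ℝ), v))
        = fun q => (fun s => σ s ^ 2) q.1 * (fun y => g y (ζ y) v) q.2 := by
      funext q; simp [stg]
    have hfun2 : (fun q : ℝ × E n => stg g f σ q ((1:ℝ), (0:E n)) ((0:ℝ), v))
        = fun _ => (0:ℝ) := by
      funext q; simp [stg, hz0L]
    have hfun3 : (fun q : ℝ × E n => stg g f σ q ((1:ℝ), (0:E n)) (h q.1, ζ q.2))
        = fun q => (fun s => h s) q.1 * (fun y => -(f y * f y)) q.2 := by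
      funext q; simp [stg, hz0L]; ring
    rw [hfun1, hfun2, hfun3] at hK
    have hσ2 : DifferentiableAt ℝ (fun s => σ s ^ 2) t := (hσd t).pow 2
    have hG1 : DifferentiableAt ℝ (fun y => g y (ζ y) v) x :=
      ((smooth_gAB hg hζ contDiff_const).differentiable (by simp)) x
    have hmf : DifferentiableAt ℝ (fun y => -(f y * f y)) x := ((hfd x).mul (hfd x)).neg
    have dsq : deriv (fun s => σ s ^ 2) t = 2 * σ t * deriv σ t := by
      have := ((hσd t).hasDerivAt.pow 2).deriv
      simp at this; exact this
    have dmf : ∀ u, fderiv ℝ (fun y => -(f y * f y)) x u = -(2 * f x * fderiv ℝ f x u) := by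
      intro u
      have H := (((hfd x).hasFDerivAt.mul (hfd x).hasFDerivAt).neg).fderiv
      rw [show (fun y => -(f y * f y)) = -(f * f) from rfl, H]; simp; ring
    simp only [fderiv_prod_mul _ _ t x hσ2 hG1, fderiv_prod_mul _ _ t x (hhd t) hmf,
      fderiv_pair _ _ t x (hhd t) (hζd x), fderiv_const, dsq, dmf] at hK
    simp [stg, hz0L, hz0R] at hK
    linear_combination (-(1:ℝ)/2) * hK
  -- key relation C
  have relC : ∀ (X : E n → E n), ContDiff ℝ (⊤ : ℕ∞) X → ∀ (t : ℝ) (x : E n) (v : E n),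
      σ t ^ 2 * g x (DM X ζ x) v + σ t * deriv σ t * h t * g x (X x) v
        = σ t ^ 2 * g x (X x) v := by
    intro X hX t x v
    have hXd : Differentiable ℝ X := hX.differentiable (by simp)
    have sXl : ContDiff ℝ (⊤ : ℕ∞) (fun q : ℝ × E n => ((0:ℝ), X q.2)) :=
      contDiff_const.prodMk (hX.comp contDiff_snd)
    have sV : ContDiff ℝ (⊤ : ℕ∞) (fun _ : ℝ × E n => ((0:ℝ), v)) := contDiff_const
    have hK := hDB (fun q => ((0:ℝ), X q.2)) (liftT h + liftX ζ)
      (fun _ => ((0:ℝ), v)) sXl sζb sV (t, x)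
    rw [hconc _ sXl (t, x)] at hK
    rw [hzb] at hK
    simp only [dd, br] at hK
    have hfun1 : (fun q : ℝ × E n => stg g f σ q (h q.1, ζ q.2) ((0:ℝ), v))
        = fun q => (fun s => σ s ^ 2) q.1 * (fun y => g y (ζ y) v) q.2 := by
      funext q; simp [stg]
    have hfun2 : (fun q : ℝ × E n => stg g f σ q ((0:ℝ), X q.2) ((0:ℝ), v))
        = fun q => (fun s => σ s ^ 2) q.1 * (fun y => g y (X y) v) q.2 := by
      funext q; simp [stg]
    have hfun3 : (fun q : ℝ × E n => stg g f σ q ((0:ℝ), X q.2) (h q.1, ζ q.2))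
        = fun q => (fun s => σ s ^ 2) q.1 * (fun y => g y (X y) (ζ y)) q.2 := by
      funext q; simp [stg]
    rw [hfun1, hfun2, hfun3] at hK
    have hσ2 : DifferentiableAt ℝ (fun s => σ s ^ 2) t := (hσd t).pow 2
    have hG1 : DifferentiableAt ℝ (fun y => g y (ζ y) v) x :=
      ((smooth_gAB hg hζ contDiff_const).differentiable (by simp)) x
    have hG2 : DifferentiableAt ℝ (fun y => g y (X y) v) x :=
      ((smooth_gAB hg hX contDiff_const).differentiable (by simp)) x
    have hG3 : DifferentiableAt ℝ (fun y => g y (X y) (ζ y)) x :=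
      ((smooth_gAB hg hX hζ).differentiable (by simp)) x
    have dsq : deriv (fun s => σ s ^ 2) t = 2 * σ t * deriv σ t := by
      have := ((hσd t).hasDerivAt.pow 2).deriv
      simp at this; exact this
    simp only [fderiv_prod_mul _ _ t x hσ2 hG1, fderiv_prod_mul _ _ t x hσ2 hG2,
      fderiv_prod_mul _ _ t x hσ2 hG3, fderiv_pair _ _ t x (hhd t) (hζd x),
      fderiv_pair0 _ t x (hXd x), fderiv_const, dsq] at hK
    have hDMv := hDM X ζ (fun _ => v) hX hζ contDiff_const x
    simp only [dd, br] at hDMv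
    simp [stg, hz0L, hz0R] at hK hDMv
    linear_combination (σ t ^ 2 / 2) * hDMv - (1/2) * hK
  refine ⟨?_, ?_, ?_⟩
  · -- part 1
    intro hyp X hX q
    have h0 : σ 0 * deriv σ 0 * h 0 = 0 := by
      rcases hyp with h1 | ⟨c, hc⟩
      · simp [h1 0]
      · have hd : deriv σ 0 = 0 := by
          rw [show σ = fun _ => c from funext hc]; simp
        simp [hd]
    have hcc : ∀ v, g q (DM X ζ q) v = g q (X q) v := by
      intro v
      have hr := relC X hX 0 q v
      have hne : (σ 0) ^ 2 ≠ 0 := pow_ne_zero _ (ne_of_gt (hσ0 0))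
      have h2 : σ 0 ^ 2 * g q (DM X ζ q) v = σ 0 ^ 2 * g q (X q) v := by
        linear_combination hr - g q (X q) v * h0
      exact mul_left_cancel₀ hne h2
    have hsub : ∀ w, g q (DM X ζ q - X q) w = g q (DM X ζ q) w - g q (X q) w :=
      fun w => (hg.linL q w).map_sub _ _
    have hw : g q (DM X ζ q - X q) (DM X ζ q - X q) = 0 := by
      rw [hsub, hcc]; ring
    have hz : DM X ζ q - X q = 0 := by
      by_contra hne
      exact absurd hw (ne_of_gt (hgp q _ hne))
    exact sub_eq_zero.mp hz
  · -- part 2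
    rintro ⟨h0, hnz⟩
    obtain ⟨p0, hp0⟩ := not_forall.mp hnz
    have hζ0 : ζ p0.2 ≠ 0 := by
      intro hv
      apply hp0
      rw [hzb]
      simp [h0 p0.1, hv, Prod.ext_iff]
    refine ⟨σ 0, fun t => is_const_of_deriv_eq_zero hσd ?_ t 0⟩
    intro s
    have hr := relD s p0.2 (ζ p0.2)
    rw [h0 s] at hr
    simp at hr
    have hgpos := hgp p0.2 (ζ p0.2) hζ0
    rcases hr with (h'' | h'') | h''
    · exact absurd h'' (ne_of_gt (hσ0 s))
    · exact h''
    · exact absurd h'' (ne_of_gt hgpos)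
  · -- part 3
    rintro ⟨⟨c, hc⟩, hfnc⟩ t
    have hds : deriv σ t = 0 := by
      rw [show σ = fun _ => c from funext hc]; simp
    obtain ⟨x, v, hxv⟩ : ∃ x v, fderiv ℝ f x v ≠ 0 := by
      by_contra hcon
      push_neg at hcon
      apply hfnc
      refine ⟨f 0, fun q => ?_⟩
      refine is_const_of_fderiv_eq_zero hfd (fun y => ?_) q 0
      exact ContinuousLinearMap.ext fun u => by simpa using hcon y u
    have hr := relD t x v
    rw [hds] at hr
    simp at hr
    rcases hr with h'' | h'' | h''
    · exact h''
    · exact absurd h'' (ne_of_gt (hf0 x))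
    · exact absurd h'' hxv
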